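/- Let x and y be two independent standard normal random vectors in ℝⁿ and α > 0. Then ℙ[α⟨x,x⟩ ≤ ⟨x,y⟩] = (1/2)·I_{1/(1+α²)}(n/2, 1/2), where I_z(a,b) is the regularized incomplete beta function. -/

import Mathlib

open MeasureTheory ProbabilityTheory Real Set
open scoped RealInnerProductSpace ENNReal NNReal


/-- The standard Gaussian measure on ℝⁿ. -/
noncomputable def stdGaussian (n : ℕ) : Measure (EuclideanSpace ℝ (Fin n)) :=
  volume.withDensity fun x => ENNReal.ofReal ((2 * Real.pi) ^ (-(n:ℝ)/2) * Real.exp (-‖x‖^2/2))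

noncomputable def gpdf (s : ℝ) : ℝ := (2*π) ^ (-(1:ℝ)/2) * Real.exp (-s^2/2)
noncomputable def gtail (c : ℝ) : ℝ := ∫ s in Ici c, gpdf s

lemma twopi_pos : (0:ℝ) < 2*π := by positivity

lemma gauss_integrable : Integrable (fun t : ℝ => Real.exp (-t^2/2)) := by
  have := integrable_exp_neg_mul_sq (b := 1/2) (by norm_num)
  convert this using 2 with t; ring_nf

lemma gpdf_integrable : Integrable gpdf := (gauss_integrable.const_mul _)
lemma gpdf_nonneg (s : ℝ) : 0 ≤ gpdf s := by unfold gpdf; positivity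

lemma integral_gpdf : ∫ s, gpdf s = 1 := by
  unfold gpdf
  rw [integral_const_mul]
  have h : (fun t : ℝ => Real.exp (-t^2/2)) = fun t : ℝ => Real.exp (-(1/2)*t^2) := by
    funext t; ring_nf
  rw [h, integral_gaussian]
  have h2 : √(π / (1/2)) = (2*π) ^ ((1:ℝ)/2) := by
    rw [sqrt_eq_rpow]; congr 1; ring
  rw [h2, ← Real.rpow_add twopi_pos]
  norm_num

lemma prod_gpdf (n : ℕ) (w : Fin n → ℝ) :
    ∏ i, gpdf (w i) = (2*π) ^ (-(n:ℝ)/2) * Real.exp (-(∑ i, (w i)^2)/2) := by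
  unfold gpdf
  rw [Finset.prod_mul_distrib, Finset.prod_const, ← Real.exp_sum]
  congr 1
  · rw [← Real.rpow_natCast ((2*π) ^ (-(1:ℝ)/2)) (Finset.univ.card),
      ← Real.rpow_mul (le_of_lt twopi_pos)]
    congr 1
    simp [Finset.card_univ]
    ring
  · congr 1
    rw [neg_div, ← Finset.sum_div]
    congr 1
    simp [neg_div]

lemma stdGaussian_halfspace (n : ℕ) (hn : 1 ≤ n) (u : EuclideanSpace ℝ (Fin n))
    (hu : ‖u‖ = 1) (c : ℝ) :
    stdGaussian n {y | c ≤ ⟪u, y⟫} = ENNReal.ofReal (gtail c) := by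

  set i₀ : Fin n := ⟨0, hn⟩
  set e₀ : EuclideanSpace ℝ (Fin n) := EuclideanSpace.single i₀ (1:ℝ) with he₀def
  have he₀ : ‖e₀‖ = 1 := by simp [he₀def, EuclideanSpace.norm_single]
  set T : EuclideanSpace ℝ (Fin n) ≃ₗᵢ[ℝ] EuclideanSpace ℝ (Fin n) := Submodule.reflection (Submodule.span ℝ {u - e₀})ᗮ with hTdef
  have hT : T u = e₀ := Submodule.reflection_sub (hu.trans he₀.symm)
  set D : EuclideanSpace ℝ (Fin n) → ℝ≥0∞ := fun y => ENNReal.ofReal ((2*π) ^ (-(n:ℝ)/2) * Real.exp (-‖y‖^2/2))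
    with hDdef
  have hDmeas : Measurable D := by
    apply Measurable.ennreal_ofReal
    fun_prop
  have hS : MeasurableSet {y : EuclideanSpace ℝ (Fin n) | c ≤ ⟪u, y⟫} := by
    have : Continuous fun y : EuclideanSpace ℝ (Fin n) => (inner ℝ u y : ℝ) := Continuous.inner continuous_const continuous_id
    exact (isClosed_le continuous_const this).measurableSet
  have hS0 : MeasurableSet {z : EuclideanSpace ℝ (Fin n) | c ≤ z i₀} := by
    have : Continuous fun z : EuclideanSpace ℝ (Fin n) => z i₀ := by
      exact (continuous_apply i₀).comp (PiLp.continuous_ofLp 2 fun _ : Fin n => ℝ)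
    exact (isClosed_le continuous_const this).measurableSet
  rw [_root_.stdGaussian, withDensity_apply _ hS, ← lintegral_indicator hS D]
  have step1 : ∫⁻ y, ({y : EuclideanSpace ℝ (Fin n) | c ≤ ⟪u, y⟫}).indicator D y =
      ∫⁻ z, ({z : EuclideanSpace ℝ (Fin n) | c ≤ z i₀}).indicator D z := by
    rw [← (T.symm.measurePreserving).lintegral_comp (hDmeas.indicator hS)]
    apply lintegral_congr
    intro z
    have hiff : (T.symm z ∈ {y : EuclideanSpace ℝ (Fin n) | c ≤ ⟪u, y⟫}) ↔ c ≤ z i₀ := by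
      have : (inner ℝ u (T.symm z) : ℝ) = z i₀ := by
        rw [← T.inner_map_map u (T.symm z), T.apply_symm_apply, hT]
        simp [he₀def, EuclideanSpace.inner_single_left]
      simp only [Set.mem_setOf_eq, this]
    have hDD : D (T.symm z) = D z := by simp [hDdef]
    by_cases h : c ≤ z i₀
    · rw [Set.indicator_of_mem (hiff.mpr h), hDD]
      exact (Set.indicator_of_mem (show z ∈ {z : EuclideanSpace ℝ (Fin n) | c ≤ z i₀} from h) D).symm
    · rw [Set.indicator_of_notMem (fun hh => h (hiff.mp hh))]
      exact (Set.indicator_of_notMem (show z ∉ {z : EuclideanSpace ℝ (Fin n) | c ≤ z i₀} from h) D).symm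
  rw [step1]
  classical
  set fi : Fin n → ℝ → ℝ := fun i => if i = i₀ then (Ici c).indicator gpdf else gpdf with hfidef
  have hfiInt : ∀ i, Integrable (fi i) := by
    intro i
    by_cases h : i = i₀
    · simp only [hfidef, h, if_pos rfl]
      exact gpdf_integrable.indicator measurableSet_Ici
    · simp only [hfidef, if_neg h]
      exact gpdf_integrable
  have hfiNonneg : ∀ i t, 0 ≤ fi i t := by
    intro i t
    by_cases h : i = i₀
    · simp only [hfidef, h, if_pos rfl]
      exact Set.indicator_nonneg (fun s _ => gpdf_nonneg s) t
    · simp only [hfidef, if_neg h]; exact gpdf_nonneg t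
  have step2 : ∫⁻ z, ({z : EuclideanSpace ℝ (Fin n) | c ≤ z i₀}).indicator D z =
      ∫⁻ w : Fin n → ℝ, ENNReal.ofReal (∏ i, fi i (w i)) := by
    rw [← (MeasurePreserving.symm _
        (EuclideanSpace.volume_preserving_symm_measurableEquiv_toLp (Fin n))).lintegral_comp
        (hDmeas.indicator hS0)]
    apply lintegral_congr
    intro w
    set z : EuclideanSpace ℝ (Fin n) := ((MeasurableEquiv.toLp 2 (Fin n → ℝ)).symm).symm w with hzdef
    have hz : ∀ i, z i = w i := fun i => rfl
    have hnorm : ‖z‖^2 = ∑ i, (w i)^2 := by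
      rw [EuclideanSpace.norm_eq, Real.sq_sqrt (by positivity)]
      refine Finset.sum_congr rfl fun i _ => ?_
      rw [hz, Real.norm_eq_abs, sq_abs]
    by_cases h : c ≤ w i₀
    · rw [Set.indicator_of_mem (show z ∈ {z : EuclideanSpace ℝ (Fin n) | c ≤ z i₀} from by
        simpa [hz] using h)]
      have hprod : ∏ i, fi i (w i) = ∏ i, gpdf (w i) := by
        refine Finset.prod_congr rfl fun i _ => ?_
        by_cases hi : i = i₀
        · simp only [hfidef, hi, if_pos rfl]
          exact Set.indicator_of_mem h gpdf
        · simp only [hfidef, if_neg hi]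
      rw [hprod, prod_gpdf, hDdef]
      simp only [hnorm]
    · rw [Set.indicator_of_notMem (show z ∉ {z : EuclideanSpace ℝ (Fin n) | c ≤ z i₀} from by
        simpa [hz] using h)]
      have hprod : ∏ i, fi i (w i) = 0 := by
        apply Finset.prod_eq_zero (Finset.mem_univ i₀)
        simp only [hfidef, if_pos rfl]
        exact Set.indicator_of_notMem h gpdf
      rw [hprod]
      simp
  rw [step2]
  rw [← MeasureTheory.ofReal_integral_eq_lintegral_ofReal (μ := volume)
    (MeasureTheory.Integrable.fintype_prod hfiInt)
    (Filter.Eventually.of_forall fun w => Finset.prod_nonneg fun i _ => hfiNonneg i (w i))]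
  congr 1
  rw [MeasureTheory.volume_pi, MeasureTheory.integral_fintype_prod_eq_prod (ι := Fin n) fi]
  rw [← Finset.prod_erase_mul Finset.univ _ (Finset.mem_univ i₀)]
  have h1 : ∫ t, fi i₀ t = gtail c := by
    simp only [hfidef, if_pos rfl]
    rw [integral_indicator measurableSet_Ici]
    rfl
  have h2 : ∏ i ∈ Finset.univ.erase i₀, ∫ t, fi i t = 1 := by
    refine Finset.prod_eq_one fun i hi => ?_
    have hne : i ≠ i₀ := Finset.ne_of_mem_erase hi
    simp only [hfidef, if_neg hne]
    exact integral_gpdf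
  rw [h1, h2, one_mul]

lemma gtail_nonneg (c : ℝ) : 0 ≤ gtail c :=
  setIntegral_nonneg measurableSet_Ici (fun s _ => gpdf_nonneg s)

lemma gtail_antitone : Antitone gtail := by
  intro a b hab
  exact setIntegral_mono_set gpdf_integrable.integrableOn
    (Filter.Eventually.of_forall gpdf_nonneg)
    (HasSubset.Subset.eventuallyLE (Ici_subset_Ici.2 hab))

lemma gtail_measurable : Measurable gtail := gtail_antitone.measurable

lemma gtail_le_one (c : ℝ) : gtail c ≤ 1 := by
  rw [← integral_gpdf]
  exact setIntegral_le_integral gpdf_integrable (Filter.Eventually.of_forall gpdf_nonneg)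

lemma image_sq_Ioi (b : ℝ) (hb : 0 < b) : (fun r => b * r^2) '' Ioi (0:ℝ) = Ioi 0 := by
  ext t
  constructor
  · rintro ⟨r, hr, rfl⟩
    have hr0 : (0:ℝ) < r := hr
    show (0:ℝ) < b * r ^ 2
    positivity
  · intro ht
    refine ⟨Real.sqrt (t / b), ?_, ?_⟩
    · exact Real.sqrt_pos.2 (div_pos ht hb)
    · show b * Real.sqrt (t/b) ^ 2 = t
      rw [Real.sq_sqrt (le_of_lt (div_pos ht hb))]
      field_simp
lemma integral_pow_exp_neg_sq (m : ℕ) (b : ℝ) (hb : 0 < b) :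
    ∫ r in Ioi (0:ℝ), r ^ m * Real.exp (-b * r^2) =
      Real.Gamma (((m:ℝ)+1)/2) / (2 * b ^ (((m:ℝ)+1)/2)) := by
  have hderiv : ∀ r ∈ Ioi (0:ℝ), HasDerivWithinAt (fun r => b * r^2) (2*b*r) (Ioi 0) r := by
    intro r _
    have := ((hasDerivAt_pow 2 r).const_mul b).hasDerivWithinAt (s := Ioi (0:ℝ))
    exact this.congr_deriv (by ring)
  have hinj : InjOn (fun r => b * r^2) (Ioi 0) := by
    intro r1 h1 r2 h2 heq
    simp only [Ioi, mem_setOf_eq] at h1 h2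
    have h : (r1 - r2) * (r1 + r2) = 0 := by
      have : b * r1^2 = b * r2^2 := heq
      have h2' : r1^2 = r2^2 := mul_left_cancel₀ (ne_of_gt hb) this
      nlinarith
    rcases mul_eq_zero.1 h with h | h
    · linarith
    · linarith
  have key := integral_image_eq_integral_abs_deriv_smul measurableSet_Ioi hderiv hinj
    (fun t => Real.exp (-t) * t ^ (((m:ℝ)+1)/2 - 1))
  rw [image_sq_Ioi b hb] at key
  rw [← Real.Gamma_eq_integral (by positivity : (0:ℝ) < ((m:ℝ)+1)/2)] at key
  -- key : Γ((m+1)/2) = ∫ r in Ioi 0, |2br| • (exp (-(b*r^2)) * (b*r^2) ^ ((m+1)/2 - 1))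
  have hcong : ∫ r in Ioi (0:ℝ), |2*b*r| • (Real.exp (-(b*r^2)) * (b*r^2) ^ (((m:ℝ)+1)/2 - 1)) =
      ∫ r in Ioi (0:ℝ), (2 * b ^ (((m:ℝ)+1)/2)) * (r ^ m * Real.exp (-b*r^2)) := by
    refine setIntegral_congr_fun measurableSet_Ioi fun r hr => ?_
    have hr0 : (0:ℝ) < r := hr
    have habs : |2*b*r| = 2*b*r := abs_of_pos (by positivity)
    have hsplit : (b*r^2) ^ (((m:ℝ)+1)/2 - 1) =
        b ^ (((m:ℝ)+1)/2 - 1) * r ^ ((m:ℝ) - 1) := by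
      rw [Real.mul_rpow hb.le (sq_nonneg r), ← Real.rpow_natCast r 2,
        ← Real.rpow_mul hr0.le]
      congr 1
      push_cast
      ring
    rw [smul_eq_mul, habs, hsplit]
    have hb1 : b * b ^ (((m:ℝ)+1)/2 - 1) = b ^ (((m:ℝ)+1)/2) := by
      nth_rewrite 1 [← Real.rpow_one b]
      rw [← Real.rpow_add hb]
      ring_nf
    have hr1 : r * r ^ ((m:ℝ) - 1) = r ^ m := by
      nth_rewrite 1 [← Real.rpow_one r]
      rw [← Real.rpow_add hr0, ← Real.rpow_natCast r m]
      ring_nf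
    calc 2*b*r * (Real.exp (-(b*r^2)) * (b ^ (((m:ℝ)+1)/2 - 1) * r ^ ((m:ℝ)-1)))
        = 2 * (b * b ^ (((m:ℝ)+1)/2 - 1)) * (r * r ^ ((m:ℝ)-1)) * Real.exp (-(b*r^2)) := by
          ring
      _ = 2 * b ^ (((m:ℝ)+1)/2) * (r ^ m * Real.exp (-b*r^2)) := by
          rw [hb1, hr1]; ring_nf
  rw [hcong, integral_const_mul] at key
  have hbpos : (0:ℝ) < b ^ (((m:ℝ)+1)/2) := Real.rpow_pos_of_pos hb _
  field_simp at key ⊢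
  linarith

lemma image_inv_one_add_sq (α : ℝ) (hα : 0 < α) :
    (fun u : ℝ => (1 + u^2)⁻¹) '' Ioi α = Ioo 0 (1/(1+α^2)) := by
  ext t
  constructor
  · rintro ⟨u, hu, rfl⟩
    have hu0 : α < u := hu
    have h1 : (0:ℝ) < 1 + u^2 := by positivity
    constructor
    · positivity
    · rw [one_div]
      apply inv_strictAnti₀ (by positivity)
      nlinarith
  · rintro ⟨ht0, ht1⟩
    have hz : (0:ℝ) < 1 + α^2 := by positivity
    have htlt : t < (1+α^2)⁻¹ := by rwa [one_div] at ht1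
    have hinv : 1 + α^2 < t⁻¹ := by
      rw [← inv_inv (1+α^2)]
      exact inv_strictAnti₀ ht0 htlt
    have hge : 0 ≤ t⁻¹ - 1 := by nlinarith
    refine ⟨Real.sqrt (t⁻¹ - 1), ?_, ?_⟩
    · show α < Real.sqrt (t⁻¹ - 1)
      have : α = Real.sqrt (α^2) := (Real.sqrt_sq hα.le).symm
      rw [this]
      apply Real.sqrt_lt_sqrt (by positivity)
      nlinarith
    · show (1 + Real.sqrt (t⁻¹-1) ^ 2)⁻¹ = t
      rw [Real.sq_sqrt hge]
      field_simp
      ring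

lemma beta_subst (n : ℕ) (α : ℝ) (hα : 0 < α) :
    ∫ t in Ioo (0:ℝ) (1/(1+α^2)), t ^ ((n:ℝ)/2 - 1) * (1-t) ^ ((1:ℝ)/2 - 1) =
      2 * ∫ u in Ioi α, (1+u^2) ^ (-((n:ℝ)+1)/2) := by
  have hderiv : ∀ u ∈ Ioi α, HasDerivWithinAt (fun u : ℝ => (1 + u^2)⁻¹)
      (-(2*u) / (1+u^2)^2) (Ioi α) u := by
    intro u _
    have h1 : HasDerivAt (fun u : ℝ => 1 + u^2) (2*u) u := by
      simpa using ((hasDerivAt_pow 2 u).const_add 1)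
    have h2 := h1.inv (by positivity)
    exact h2.hasDerivWithinAt
  have hinj : InjOn (fun u : ℝ => (1 + u^2)⁻¹) (Ioi α) := by
    intro u1 h1 u2 h2 heq
    simp only [mem_Ioi] at h1 h2
    have e1 : (1:ℝ) + u1^2 = 1 + u2^2 := by
      have := congrArg (·⁻¹) heq
      simpa using this
    have h : (u1 - u2) * (u1 + u2) = 0 := by nlinarith
    rcases mul_eq_zero.1 h with h | h
    · linarith
    · nlinarith
  have key := integral_image_eq_integral_abs_deriv_smul measurableSet_Ioi hderiv hinj
    (fun t => t ^ ((n:ℝ)/2 - 1) * (1-t) ^ ((1:ℝ)/2 - 1))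
  rw [image_inv_one_add_sq α hα] at key
  rw [key]
  rw [← integral_const_mul]
  refine setIntegral_congr_fun measurableSet_Ioi fun u hu => ?_
  have hu0 : 0 < u := lt_trans hα hu
  have h1 : (0:ℝ) < 1 + u^2 := by positivity
  have habs : |(-(2*u) / (1+u^2)^2)| = 2*u / (1+u^2)^2 := by
    rw [abs_div, abs_neg, abs_of_pos (by positivity : (0:ℝ) < 2*u),
      abs_of_pos (by positivity : (0:ℝ) < (1+u^2)^2)]
  have hsub : (1:ℝ) - (1+u^2)⁻¹ = u^2 / (1+u^2) := by field_simp; ring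
  rw [smul_eq_mul, habs, hsub]
  have e1 : ((1+u^2)⁻¹ : ℝ) ^ ((n:ℝ)/2 - 1) = (1+u^2) ^ (-((n:ℝ)/2 - 1)) := by
    rw [Real.inv_rpow h1.le, ← Real.rpow_neg h1.le]
  have e2 : ((u^2/(1+u^2)) : ℝ) ^ ((1:ℝ)/2 - 1) = u⁻¹ / (1+u^2) ^ ((1:ℝ)/2 - 1) := by
    have hnum : (u^2 : ℝ) ^ ((1:ℝ)/2 - 1) = u⁻¹ := by
      rw [← Real.rpow_natCast u 2, ← Real.rpow_mul hu0.le,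
        show ((2:ℕ):ℝ) * ((1:ℝ)/2-1) = -1 by push_cast; norm_num, Real.rpow_neg_one]
    rw [Real.div_rpow (sq_nonneg u) h1.le, hnum]
  rw [e1, e2]
  have c1 : (1+u^2) ^ (-((n:ℝ)/2-1)) / (1+u^2) ^ ((1:ℝ)/2-1) = (1+u^2) ^ (-((n:ℝ)/2) + (3:ℝ)/2) := by
    rw [← Real.rpow_sub h1]; congr 1; ring
  have c2 : (1+u^2) ^ (-((n:ℝ)/2) + (3:ℝ)/2) / (1+u^2)^(2:ℕ) = (1+u^2) ^ (-((n:ℝ)+1)/2) := by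
    rw [← Real.rpow_natCast (1+u^2) 2, ← Real.rpow_sub h1]; congr 1; push_cast; ring
  calc 2*u/(1+u^2)^2 * ((1+u^2) ^ (-((n:ℝ)/2-1)) * (u⁻¹ / (1+u^2) ^ ((1:ℝ)/2-1)))
      = (u * u⁻¹) * (2 * ((1+u^2) ^ (-((n:ℝ)/2-1)) / (1+u^2) ^ ((1:ℝ)/2-1) / (1+u^2)^(2:ℕ))) := by
        ring
    _ = 2 * (1+u^2) ^ (-((n:ℝ)+1)/2) := by
        rw [c1, c2, mul_inv_cancel₀ (ne_of_gt hu0), one_mul]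

lemma swap_chain (n : ℕ) (hn : 1 ≤ n) (α : ℝ) (hα : 0 < α)
    (hK : IntegrableOn (fun r => ∫ u in Ioi α, r^n * Real.exp (-((1+u^2)/2) * r^2)) (Ioi 0)) :
    ∫ r in Ioi (0:ℝ), ∫ u in Ioi α, r^n * Real.exp (-((1+u^2)/2) * r^2) =
      (Real.Gamma (((n:ℝ)+1)/2) * 2 ^ (((n:ℝ)+1)/2) / 2) *
        ∫ u in Ioi α, (1+u^2) ^ (-((n:ℝ)+1)/2) := by
  set W : ℝ → ℝ → ℝ := fun r u => r^n * Real.exp (-((1+u^2)/2) * r^2) with hWdef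
  have hWcont : Continuous (Function.uncurry W) := by
    apply Continuous.mul
    · fun_prop
    · fun_prop
  have hWnonneg : ∀ r, 0 < r → ∀ u, 0 ≤ W r u := by
    intro r hr u
    have : (0:ℝ) < r ^ n := by positivity
    positivity
  have hWle : ∀ r, 0 < r → ∀ u, W r u ≤ r^n * Real.exp (-(r^2) * u) := by
    intro r hr u
    apply mul_le_mul_of_nonneg_left _ (by positivity : (0:ℝ) ≤ r^n)
    apply Real.exp_le_exp.2
    have h1 : u ≤ (1+u^2)/2 := by nlinarith [sq_nonneg (1-u)]
    nlinarith [sq_nonneg r, mul_le_mul_of_nonneg_right h1 (sq_nonneg r)]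
  have hWint : ∀ r : ℝ, 0 < r → IntegrableOn (W r) (Ioi α) := by
    intro r hr
    apply Integrable.mono' (((exp_neg_integrableOn_Ioi α (by positivity : (0:ℝ) < r^2))).const_mul (r^n))
    · exact (hWcont.comp (Continuous.prodMk_right r)).aestronglyMeasurable
    · refine Filter.Eventually.of_forall fun u => ?_
      rw [Real.norm_eq_abs, abs_of_nonneg (hWnonneg r hr u)]
      exact hWle r hr u
  have hrint : ∀ u : ℝ, IntegrableOn (fun r => W r u) (Ioi 0) := by
    intro u
    have hb : (0:ℝ) < (1+u^2)/2 := by positivity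
    have h0 := integrableOn_rpow_mul_exp_neg_mul_sq hb
      (show (-1:ℝ) < (n:ℝ) from lt_of_lt_of_le (by norm_num) (Nat.cast_nonneg n))
    exact h0.congr_fun (fun x _ => by simp [hWdef, Real.rpow_natCast, neg_mul]) measurableSet_Ioi
  set J : ℝ → ℝ := fun u => Real.Gamma (((n:ℝ)+1)/2) / (2 * ((1+u^2)/2) ^ (((n:ℝ)+1)/2))
    with hJdef
  have hJeq : ∀ u : ℝ, J u =
      (Real.Gamma (((n:ℝ)+1)/2) * 2 ^ (((n:ℝ)+1)/2) / 2) * (1+u^2) ^ (-((n:ℝ)+1)/2) := by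
    intro u
    have h1 : (0:ℝ) < 1 + u^2 := by positivity
    have h2 : ((1+u^2)/2 : ℝ) ^ (((n:ℝ)+1)/2) = (1+u^2) ^ (((n:ℝ)+1)/2) / 2 ^ (((n:ℝ)+1)/2) :=
      Real.div_rpow h1.le (by norm_num) _
    have h3 : ((1+u^2) : ℝ) ^ (-((n:ℝ)+1)/2) = ((1+u^2) ^ (((n:ℝ)+1)/2))⁻¹ := by
      rw [← Real.rpow_neg h1.le]
      congr 1
      ring
    rw [hJdef]
    simp only
    rw [h2, h3]
    have h4 : (0:ℝ) < (1+u^2) ^ (((n:ℝ)+1)/2) := Real.rpow_pos_of_pos h1 _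
    have h5 : (0:ℝ) < (2:ℝ) ^ (((n:ℝ)+1)/2) := Real.rpow_pos_of_pos (by norm_num) _
    field_simp
  have hJint : IntegrableOn J (Ioi α) := by
    have hbase : IntegrableOn (fun u : ℝ => u ^ (-((n:ℝ)+1))) (Ioi α) :=
      integrableOn_Ioi_rpow_of_lt (by
        have : (1:ℝ) ≤ (n:ℝ) := Nat.one_le_cast.mpr hn
        linarith) hα
    apply Integrable.mono' (hbase.const_mul (Real.Gamma (((n:ℝ)+1)/2) * 2 ^ (((n:ℝ)+1)/2) / 2))
    · apply Continuous.aestronglyMeasurable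
      rw [hJdef]
      apply continuous_const.div
      · exact continuous_const.mul ((((continuous_const.add (continuous_pow 2)).div_const 2).rpow_const
          (fun x => Or.inr (by positivity))))
      · intro x
        have hp : (0:ℝ) < ((1+x^2)/2) ^ (((n:ℝ)+1)/2) := Real.rpow_pos_of_pos (by positivity) _
        positivity
    · refine (ae_restrict_iff' measurableSet_Ioi).mpr
        (Filter.Eventually.of_forall fun u hu => ?_)
      have hu0 : 0 < u := lt_trans hα hu
      have h1 : (0:ℝ) < 1 + u^2 := by positivity
      have hC : (0:ℝ) ≤ Real.Gamma (((n:ℝ)+1)/2) * 2 ^ (((n:ℝ)+1)/2) / 2 := by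
        have := Real.Gamma_pos_of_pos (show (0:ℝ) < ((n:ℝ)+1)/2 by positivity)
        positivity
      rw [Real.norm_eq_abs, abs_of_nonneg (by rw [hJeq u]; positivity)]
      rw [hJeq u]
      apply mul_le_mul_of_nonneg_left _ hC
      have step1 : ((1+u^2):ℝ) ^ (-((n:ℝ)+1)/2) ≤ (u^2) ^ (-((n:ℝ)+1)/2) := by
        have := Real.rpow_le_rpow_of_nonpos (by positivity : (0:ℝ) < u^2)
          (by nlinarith : (u^2:ℝ) ≤ 1 + u^2)
          (by { have : (0:ℝ) ≤ (n:ℝ) := Nat.cast_nonneg n; linarith } : -((n:ℝ)+1)/2 ≤ 0)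
        exact this
      have step2 : ((u^2):ℝ) ^ (-((n:ℝ)+1)/2) = u ^ (-((n:ℝ)+1)) := by
        rw [← Real.rpow_natCast u 2, ← Real.rpow_mul hu0.le]
        congr 1
        push_cast
        ring
      rw [← step2]
      exact step1
  have hJnonneg : ∀ u : ℝ, 0 ≤ J u := by
    intro u
    have h1 : (0:ℝ) < 1 + u^2 := by positivity
    have := Real.Gamma_pos_of_pos (show (0:ℝ) < ((n:ℝ)+1)/2 by positivity)
    have h4 : (0:ℝ) < ((1+u^2)/2) ^ (((n:ℝ)+1)/2) := Real.rpow_pos_of_pos (by positivity) _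
    rw [hJdef]
    positivity
  -- main chain in ℝ≥0∞
  have key : ENNReal.ofReal (∫ r in Ioi (0:ℝ), ∫ u in Ioi α, W r u) =
      ENNReal.ofReal (∫ u in Ioi α, J u) := by
    calc ENNReal.ofReal (∫ r in Ioi (0:ℝ), ∫ u in Ioi α, W r u)
        = ∫⁻ r in Ioi (0:ℝ), ENNReal.ofReal (∫ u in Ioi α, W r u) := by
          apply ofReal_integral_eq_lintegral_ofReal hK
          exact (ae_restrict_iff' measurableSet_Ioi).mpr (Filter.Eventually.of_forall fun r hr =>
            setIntegral_nonneg measurableSet_Ioi fun u _ => hWnonneg r hr u)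
      _ = ∫⁻ r in Ioi (0:ℝ), ∫⁻ u in Ioi α, ENNReal.ofReal (W r u) := by
          apply lintegral_congr_ae
          refine (ae_restrict_iff' measurableSet_Ioi).mpr
            (Filter.Eventually.of_forall fun r hr => ?_)
          exact ofReal_integral_eq_lintegral_ofReal (hWint r hr)
            (Filter.Eventually.of_forall fun u => hWnonneg r hr u)
      _ = ∫⁻ u in Ioi α, ∫⁻ r in Ioi (0:ℝ), ENNReal.ofReal (W r u) := by
          apply lintegral_lintegral_swap
          exact (ENNReal.measurable_ofReal.comp hWcont.measurable).aemeasurable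
      _ = ∫⁻ u in Ioi α, ENNReal.ofReal (J u) := by
          apply lintegral_congr_ae
          refine Filter.Eventually.of_forall fun u => ?_
          show ∫⁻ r in Ioi 0, ENNReal.ofReal (W r u) = ENNReal.ofReal (J u)
          rw [← ofReal_integral_eq_lintegral_ofReal (hrint u)
            ((ae_restrict_iff' measurableSet_Ioi).mpr
              (Filter.Eventually.of_forall fun r hr => hWnonneg r hr u))]
          congr 1
          have := integral_pow_exp_neg_sq n ((1+u^2)/2) (by positivity)
          exact this
      _ = ENNReal.ofReal (∫ u in Ioi α, J u) := by
          rw [ofReal_integral_eq_lintegral_ofReal hJint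
            (Filter.Eventually.of_forall hJnonneg)]
  have hLnonneg : 0 ≤ ∫ r in Ioi (0:ℝ), ∫ u in Ioi α, W r u := by
    apply setIntegral_nonneg measurableSet_Ioi
    intro r hr
    exact setIntegral_nonneg measurableSet_Ioi fun u _ => hWnonneg r hr u
  have hRnonneg : 0 ≤ ∫ u in Ioi α, J u :=
    setIntegral_nonneg measurableSet_Ioi fun u _ => hJnonneg u
  have hreal : ∫ r in Ioi (0:ℝ), ∫ u in Ioi α, W r u = ∫ u in Ioi α, J u :=
    (ENNReal.ofReal_eq_ofReal_iff hLnonneg hRnonneg).1 key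
  rw [hreal]
  rw [← integral_const_mul]
  exact setIntegral_congr_fun measurableSet_Ioi fun u _ => hJeq u


lemma norm_symm_sq (n : ℕ) (w : Fin n → ℝ) :
    ‖((MeasurableEquiv.toLp 2 (Fin n → ℝ)).symm).symm w‖^2 = ∑ i, (w i)^2 := by
  rw [EuclideanSpace.norm_eq, Real.sq_sqrt (by positivity)]
  refine Finset.sum_congr rfl fun i _ => ?_
  rw [show (((MeasurableEquiv.toLp 2 (Fin n → ℝ)).symm).symm w) i = w i from rfl,
    Real.norm_eq_abs, sq_abs]

lemma integrable_gaussE (n : ℕ) :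
    Integrable (fun x : EuclideanSpace ℝ (Fin n) => Real.exp (-‖x‖^2/2)) := by
  rw [← (MeasurePreserving.symm _
      (EuclideanSpace.volume_preserving_symm_measurableEquiv_toLp (Fin n))).integrable_comp_emb
      (MeasurableEquiv.measurableEmbedding _)]
  have h : ((fun x : EuclideanSpace ℝ (Fin n) => Real.exp (-‖x‖^2/2)) ∘
      ⇑((MeasurableEquiv.toLp 2 (Fin n → ℝ)).symm).symm)
      = fun w : Fin n → ℝ => ∏ i, Real.exp (-(w i)^2/2) := by
    funext w
    simp only [Function.comp_apply]
    rw [norm_symm_sq n w, ← Real.exp_sum]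
    congr 1
    rw [neg_div, ← Finset.sum_div]
    congr 1
    simp [neg_div]
  rw [h]
  exact Integrable.fintype_prod (fun _ => gauss_integrable)


/-- The regularized incomplete beta function I_z(a,b). -/
noncomputable def regIncBeta (z a b : ℝ) : ℝ :=
  (∫ t in Set.Ioo 0 z, t ^ (a-1) * (1-t) ^ (b-1)) /
    (Real.Gamma a * Real.Gamma b / Real.Gamma (a+b))


theorem stmt_7 (n : ℕ) (hn : 1 ≤ n) (α : ℝ) (hα : 0 < α) :
    ((stdGaussian n).prod (stdGaussian n)) {p | α * ⟪p.1, p.1⟫ ≤ ⟪p.1, p.2⟫} =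
      ENNReal.ofReal ((1/2) * regIncBeta (1/(1+α^2)) ((n:ℝ)/2) (1/2)) := by
  haveI : Nontrivial (EuclideanSpace ℝ (Fin n)) := by
    refine ⟨0, EuclideanSpace.single ⟨0, hn⟩ 1, fun hh => ?_⟩
    have h := congrArg norm hh
    simp [EuclideanSpace.norm_single] at h
  have hS : MeasurableSet {p : EuclideanSpace ℝ (Fin n) × EuclideanSpace ℝ (Fin n) |
      α * ⟪p.1, p.1⟫ ≤ ⟪p.1, p.2⟫} := by
    have h1 : Continuous fun p : EuclideanSpace ℝ (Fin n) × EuclideanSpace ℝ (Fin n) =>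
        α * (inner ℝ p.1 p.1 : ℝ) :=
      continuous_const.mul (Continuous.inner continuous_fst continuous_fst)
    have h2 : Continuous fun p : EuclideanSpace ℝ (Fin n) × EuclideanSpace ℝ (Fin n) =>
        (inner ℝ p.1 p.2 : ℝ) := Continuous.inner continuous_fst continuous_snd
    exact (isClosed_le h1 h2).measurableSet
  haveI hsf : SFinite (stdGaussian n) := by rw [_root_.stdGaussian]; infer_instance
  rw [Measure.prod_apply hS]
  have hae : ∀ᵐ x ∂(stdGaussian n), x ≠ 0 := by
    rw [ae_iff]
    have hset : {x : EuclideanSpace ℝ (Fin n) | ¬ x ≠ 0} = {(0 : EuclideanSpace ℝ (Fin n))} := by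
      ext x; simp
    rw [hset, _root_.stdGaussian]
    exact withDensity_absolutelyContinuous volume _ (measure_singleton 0)
  have hslice : (fun x => (stdGaussian n)
        (Prod.mk x ⁻¹' {p | α * ⟪p.1, p.1⟫ ≤ ⟪p.1, p.2⟫}))
      =ᵐ[stdGaussian n] fun x => ENNReal.ofReal (gtail (α * ‖x‖)) := by
    filter_upwards [hae] with x hx
    have hxn : 0 < ‖x‖ := norm_pos_iff.mpr hx
    have hset : (Prod.mk x ⁻¹' {p : EuclideanSpace ℝ (Fin n) × EuclideanSpace ℝ (Fin n) |
        α * ⟪p.1, p.1⟫ ≤ ⟪p.1, p.2⟫}) =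
        {y : EuclideanSpace ℝ (Fin n) | α * ‖x‖ ≤ ⟪(‖x‖⁻¹ • x), y⟫} := by
      ext y
      simp only [mem_preimage, mem_setOf_eq]
      rw [real_inner_smul_left, inv_mul_eq_div, le_div_iff₀ hxn]
      have hxx := real_inner_self_eq_norm_sq x
      constructor
      · intro h; nlinarith
      · intro h; nlinarith
    rw [hset, stdGaussian_halfspace n hn _
      (by rw [norm_smul, norm_inv, norm_norm]; field_simp) (α * ‖x‖)]
  rw [lintegral_congr_ae hslice]
  rw [_root_.stdGaussian, lintegral_withDensity_eq_lintegral_mul _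
    (by apply Measurable.ennreal_ofReal; fun_prop)
    (show Measurable fun x : EuclideanSpace ℝ (Fin n) => ENNReal.ofReal (gtail (α * ‖x‖)) from
      ENNReal.measurable_ofReal.comp (gtail_measurable.comp (measurable_norm.const_mul α)))]
  set Hn : ℝ → ℝ := fun r => (2 * Real.pi) ^ (-(n:ℝ)/2) * Real.exp (-r^2/2) * gtail (α*r)
    with hHdef
  have hHmeas : Measurable Hn := by
    apply Measurable.mul
    · fun_prop
    · exact gtail_measurable.comp (measurable_id.const_mul α)
  have hHnonneg : ∀ r, 0 ≤ Hn r := fun r => mul_nonneg (by positivity) (gtail_nonneg _)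
  have hpt : (fun x : EuclideanSpace ℝ (Fin n) =>
      ((fun x : EuclideanSpace ℝ (Fin n) =>
          ENNReal.ofReal ((2 * Real.pi) ^ (-(n:ℝ)/2) * Real.exp (-‖x‖^2/2))) *
        (fun x : EuclideanSpace ℝ (Fin n) => ENNReal.ofReal (gtail (α * ‖x‖)))) x) =
      fun x : EuclideanSpace ℝ (Fin n) => ENNReal.ofReal (Hn ‖x‖) := by
    funext x
    simp only [Pi.mul_apply]
    rw [← ENNReal.ofReal_mul (by positivity)]
  rw [hpt]
  have hHint : Integrable (fun x : EuclideanSpace ℝ (Fin n) => Hn ‖x‖) := by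
    apply Integrable.mono' ((integrable_gaussE n).const_mul ((2 * Real.pi) ^ (-(n:ℝ)/2)))
    · exact (hHmeas.comp measurable_norm).aestronglyMeasurable
    · refine Filter.Eventually.of_forall fun x => ?_
      rw [Real.norm_eq_abs, abs_of_nonneg (hHnonneg _), hHdef]
      exact mul_le_of_le_one_right (by positivity) (gtail_le_one _)
  rw [← ofReal_integral_eq_lintegral_ofReal hHint
    (Filter.Eventually.of_forall fun x => hHnonneg ‖x‖)]
  rw [MeasureTheory.integral_fun_norm_addHaar volume Hn]
  congr 1
  simp only [finrank_euclideanSpace_fin, nsmul_eq_mul, smul_eq_mul]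
  -- ball volume
  have hG2 : 0 < Real.Gamma (((n:ℝ)+1)/2) := Real.Gamma_pos_of_pos (by positivity)
  have hG1 : 0 < Real.Gamma ((n:ℝ)/2) := Real.Gamma_pos_of_pos (by
    have : (0:ℝ) < n := by exact_mod_cast hn
    positivity)
  have hball : ((volume : Measure (EuclideanSpace ℝ (Fin n))) (Metric.ball 0 1)).toReal
      = π ^ ((n:ℝ)/2) / Real.Gamma ((n:ℝ)/2 + 1) := by
    haveI : Nonempty (Fin n) := ⟨⟨0, hn⟩⟩
    rw [EuclideanSpace.volume_ball]
    have hpos : (0:ℝ) ≤ √π ^ Fintype.card (Fin n) / Real.Gamma (Fintype.card (Fin n) / 2 + 1) := by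
      have := Real.Gamma_pos_of_pos
        (show (0:ℝ) < (Fintype.card (Fin n) : ℝ)/2 + 1 by positivity)
      positivity
    rw [ENNReal.ofReal_one, one_pow, one_mul, ENNReal.toReal_ofReal hpos]
    rw [Fintype.card_fin]
    congr 1
    rw [Real.sqrt_eq_rpow, ← Real.rpow_natCast (π ^ ((1:ℝ)/2)) n, ← Real.rpow_mul pi_pos.le]
    congr 1
    ring
  rw [measureReal_def, hball]
  -- pointwise identity on Ioi 0
  have hpoint : ∀ r ∈ Ioi (0:ℝ), r ^ (n - 1) * Hn r =
      ((2 * Real.pi) ^ (-(n:ℝ)/2) * (2 * Real.pi) ^ (-(1:ℝ)/2)) *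
        ∫ u in Ioi α, r^n * Real.exp (-((1+u^2)/2) * r^2) := by
    intro r hr
    have hr0 : (0:ℝ) < r := hr
    have hg : gtail (α * r) = r * ∫ u in Ioi α, gpdf (r * u) := by
      rw [show gtail (α*r) = ∫ s in Ici (α*r), gpdf s from rfl, integral_Ici_eq_integral_Ioi,
        integral_comp_mul_left_Ioi gpdf α hr0, smul_eq_mul, ← mul_assoc,
        mul_inv_cancel₀ (ne_of_gt hr0), one_mul, mul_comm r α]
    have hsplit : ∀ u : ℝ, r^n * Real.exp (-((1+u^2)/2) * r^2) =
        (r^n * Real.exp (-r^2/2)) * Real.exp (-(r*u)^2/2) := by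
      intro u
      rw [mul_assoc, ← Real.exp_add]
      congr 1
      ring
    rw [hHdef]
    simp only
    rw [hg, setIntegral_congr_fun measurableSet_Ioi (fun u _ => hsplit u), integral_const_mul]
    have hgpdf : ∀ u : ℝ, gpdf (r * u) = (2*π) ^ (-(1:ℝ)/2) * Real.exp (-(r*u)^2/2) := fun u => rfl
    rw [setIntegral_congr_fun measurableSet_Ioi (fun u _ => hgpdf u), integral_const_mul]
    have hrn : r ^ (n-1) * r = r ^ n := by
      rw [← pow_succ, Nat.sub_add_cancel hn]
    calc r ^ (n-1) * ((2 * π) ^ (-(n:ℝ)/2) * Real.exp (-r^2/2) *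
          (r * ((2*π) ^ (-(1:ℝ)/2) * ∫ u in Ioi α, Real.exp (-(r*u)^2/2))))
        = (r ^ (n-1) * r) * ((2 * π) ^ (-(n:ℝ)/2) * (2*π) ^ (-(1:ℝ)/2)) *
          (Real.exp (-r^2/2) * ∫ u in Ioi α, Real.exp (-(r*u)^2/2)) := by ring
      _ = (2 * π) ^ (-(n:ℝ)/2) * (2*π) ^ (-(1:ℝ)/2) *
          (r^n * Real.exp (-r^2/2) * ∫ u in Ioi α, Real.exp (-(r*u)^2/2)) := by
          rw [hrn]; ring
  have hI1int : IntegrableOn (fun r => r ^ (n-1) * Hn r) (Ioi 0) := by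
    have hbase := (integrableOn_rpow_mul_exp_neg_mul_sq (by norm_num : (0:ℝ) < 1/2)
      (show (-1:ℝ) < ((n-1:ℕ):ℝ) from lt_of_lt_of_le (by norm_num) (Nat.cast_nonneg _)))
    apply Integrable.mono' (hbase.const_mul ((2 * Real.pi) ^ (-(n:ℝ)/2)))
    · exact ((measurable_id.pow_const (n-1)).mul (hHmeas.comp measurable_id)).aestronglyMeasurable
    · refine (ae_restrict_iff' measurableSet_Ioi).mpr
        (Filter.Eventually.of_forall fun r hr => ?_)
      have hr0 : (0:ℝ) < r := hr
      rw [Real.norm_eq_abs, abs_of_nonneg (mul_nonneg (by positivity) (hHnonneg r))]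
      rw [Real.rpow_natCast]
      have hH : Hn r ≤ (2 * Real.pi) ^ (-(n:ℝ)/2) * Real.exp (-r^2/2) :=
        mul_le_of_le_one_right (by positivity) (gtail_le_one _)
      have hexp : Real.exp (-(1/2) * r^2) = Real.exp (-r^2/2) := by ring_nf
      rw [hexp]
      calc r ^ (n-1) * Hn r ≤ r ^ (n-1) * ((2 * Real.pi) ^ (-(n:ℝ)/2) * Real.exp (-r^2/2)) :=
            mul_le_mul_of_nonneg_left hH (by positivity)
        _ = (2 * Real.pi) ^ (-(n:ℝ)/2) * (r ^ (n-1) * Real.exp (-r^2/2)) := by ring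
  have hcc : (0:ℝ) < (2 * Real.pi) ^ (-(n:ℝ)/2) * (2 * Real.pi) ^ (-(1:ℝ)/2) := by
    have h1 : (0:ℝ) < (2 * Real.pi) ^ (-(n:ℝ)/2) := Real.rpow_pos_of_pos twopi_pos _
    have h2 : (0:ℝ) < (2 * Real.pi) ^ (-(1:ℝ)/2) := Real.rpow_pos_of_pos twopi_pos _
    positivity
  have hKint : IntegrableOn
      (fun r => ∫ u in Ioi α, r^n * Real.exp (-((1+u^2)/2) * r^2)) (Ioi 0) := by
    have h' : IntegrableOn
        (fun r => (((2 * Real.pi) ^ (-(n:ℝ)/2) * (2 * Real.pi) ^ (-(1:ℝ)/2))⁻¹) *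
          (r ^ (n-1) * Hn r)) (Ioi 0) :=
      hI1int.const_mul _
    exact h'.congr_fun
      (fun r hr => by beta_reduce; rw [hpoint r hr, ← mul_assoc, inv_mul_cancel₀ (ne_of_gt hcc), one_mul])
      measurableSet_Ioi
  have hswap := swap_chain n hn α hα hKint
  have hbeta := beta_subst n α hα
  rw [setIntegral_congr_fun measurableSet_Ioi hpoint, integral_const_mul, hswap]
  -- now a pure scalar identity
  rw [regIncBeta]
  rw [show (1:ℝ)/(1+α^2) = 1/(1+α^2) from rfl]
  rw [show ((n:ℝ)/2 + 1/2 : ℝ) = ((n:ℝ)+1)/2 from by ring]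
  rw [hbeta, Real.Gamma_one_half_eq]
  have hnR : (0:ℝ) < (n:ℝ) := by exact_mod_cast hn
  rw [Real.Gamma_add_one (by positivity : ((n:ℝ)/2) ≠ 0)]
  have hkey : (2*π:ℝ) ^ (-(n:ℝ)/2) * (2*π) ^ (-(1:ℝ)/2) =
      (2 ^ (((n:ℝ)+1)/2) * π ^ ((n:ℝ)/2) * √π)⁻¹ := by
    rw [← Real.rpow_add twopi_pos,
      show (-(n:ℝ)/2 + -(1:ℝ)/2) = -(((n:ℝ)+1)/2) from by ring,
      Real.rpow_neg (le_of_lt twopi_pos)]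
    congr 1
    rw [Real.mul_rpow (by norm_num) pi_pos.le,
      show (((n:ℝ)+1)/2) = (n:ℝ)/2 + 1/2 from by ring, Real.rpow_add pi_pos,
      Real.sqrt_eq_rpow]
    ring
  rw [hkey]
  have ha : (0:ℝ) < π ^ ((n:ℝ)/2) := Real.rpow_pos_of_pos pi_pos _
  have hb : (0:ℝ) < (2:ℝ) ^ (((n:ℝ)+1)/2) := Real.rpow_pos_of_pos (by norm_num) _
  have hs : (0:ℝ) < √π := Real.sqrt_pos.2 pi_pos
  field_simp
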